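/- Suppose n = p + q is even. Then for every element a of the Clifford algebra Cl = ℝ_{p,q} there exists a real number r (the scalar part of a) such that: (1) ∑_J e_J · a · e^J = algebraMap ℝ Cl (2^n · r), where the sum runs over all subsets J of Fin n; and (2) a − algebraMap ℝ Cl r lies in the ℝ-linear span of the set { e_I : I a nonempty finite subset of Fin n }. -/

import Mathlib

noncomputable section

/-- The weights of the quadratic form of signature `(p, q)`: `1` for the first `p`
coordinates and `-1` for the remaining ones. -/
def cliffordWeight (p : ℕ) {n : ℕ} (i : Fin n) : ℝ := if (i : ℕ) < p then 1 else -1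

/-- The quadratic form of signature `(p, q)` on `Fin (p + q) → ℝ`. -/
def cliffordQ (p q : ℕ) : QuadraticForm ℝ (Fin (p + q) → ℝ) :=
  QuadraticMap.weightedSumSquares ℝ (cliffordWeight p)

/-- The generator `e i` of the Clifford algebra `ℝ_{p,q}`. -/
def cliffordE (p q : ℕ) (i : Fin (p + q)) : CliffordAlgebra (cliffordQ p q) :=
  CliffordAlgebra.ι (cliffordQ p q) (Pi.single i 1)

/-- `e_J`: the product of the generators `e j` for `j ∈ J`, in increasing order. -/
def eLower (p q : ℕ) (J : Finset (Fin (p + q))) : CliffordAlgebra (cliffordQ p q) :=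
  ((J.sort (· ≤ ·)).map (cliffordE p q)).prod

/-- `e^J`: the product of the elements `w j • e j` for `j ∈ J`, in decreasing order. -/
def eUpper (p q : ℕ) (J : Finset (Fin (p + q))) : CliffordAlgebra (cliffordQ p q) :=
  ((J.sort (· ≤ ·)).reverse.map (fun j => cliffordWeight p j • cliffordE p q j)).prod

/-! Conjugation `x ↦ e_j x (w_j e_j)` multiplies `e_I` by `(-1)^|I \ {j}|`, and `x ↦ e_J x e^J`
is the composite of these conjugations over `j ∈ J`. Summing over `J` therefore multiplies `e_I` by
`∏_j (1 + (-1)^|I \ {j}|)`, which is `2^n` for `I = ∅`; for `I ≠ ∅` and `n` even one factor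
vanishes: take `j ∈ I` if `|I|` is even and `j ∉ I` if `|I|` is odd. Since left multiplication by
`e_i` sends `e_I` to a multiple of `e_{{i} ∆ I}`, the `e_I` span the algebra, and `r` is the
coefficient of `e_∅ = 1`. -/

open Finset
open scoped symmDiff

section AlgebraicIdentities

variable {R A ι : Type*} [CommRing R] [Ring A] [Algebra R A]

theorem List.prod_map_mul_mul_prod_map_reverse (u v : ι → A) (c : ι → R) {x : A} (m : List ι)
    (h : ∀ j ∈ m, u j * x * v j = c j • x) :
    (m.map u).prod * x * (m.reverse.map v).prod = (m.map c).prod • x := by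
  induction m with
  | nil => simp
  | cons j t ih =>
    have ht := ih fun k hk => h k (List.mem_cons_of_mem j hk)
    simp only [List.reverse_cons, List.map_append, List.map_cons, List.map_nil, List.prod_append,
      List.prod_cons, List.prod_nil, mul_one]
    calc u j * (t.map u).prod * x * ((t.reverse.map v).prod * v j)
        = u j * ((t.map u).prod * x * (t.reverse.map v).prod) * v j := by simp only [mul_assoc]
      _ = (t.map c).prod • (u j * x * v j) := by rw [ht, mul_smul_comm, smul_mul_assoc]
      _ = (c j * (t.map c).prod) • x := by rw [h j List.mem_cons_self, smul_smul, mul_comm]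

theorem mul_prod_map_of_anticomm [DecidableEq ι] {e : ι → A}
    (he : ∀ i j, i ≠ j → e i * e j = -(e j * e i)) (j : ι) (l : List ι) :
    e j * (l.map e).prod = ((-1 : R) ^ l.countP (· ≠ j)) • ((l.map e).prod * e j) := by
  induction l with
  | nil => simp
  | cons k t ih =>
    simp only [List.map_cons, List.prod_cons, List.countP_cons]
    by_cases hkj : k = j
    · subst hkj
      simp [← mul_assoc, ih]
    · rw [← mul_assoc, he j k (Ne.symm hkj), neg_mul, mul_assoc, ih, mul_smul_comm]
      simp [hkj, pow_succ, mul_assoc]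

theorem Finset.exists_odd_card_erase [Fintype ι] [DecidableEq ι] (hι : Even (Fintype.card ι))
    {I : Finset ι} (hI : I.Nonempty) : ∃ j, Odd (I.erase j).card := by
  rcases Nat.even_or_odd #I with heven | hodd
  · obtain ⟨j, hj⟩ := hI
    refine ⟨j, ?_⟩
    rw [card_erase_of_mem hj]
    exact Nat.Even.sub_odd (card_pos.2 ⟨j, hj⟩) heven odd_one
  · have hne : I ≠ univ := by rintro rfl; exact Nat.not_even_iff_odd.2 hodd hι
    obtain ⟨j, hj⟩ := (Set.ne_univ_iff_exists_notMem (I : Set ι)).1 (by simpa using hne)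
    exact ⟨j, by rwa [erase_eq_of_notMem hj]⟩

theorem Finset.sum_prod_neg_one_pow_card_erase [Fintype ι] [DecidableEq ι]
    (hι : Even (Fintype.card ι)) (I : Finset ι) :
    ∑ J : Finset ι, ∏ j ∈ J, (-1 : R) ^ (I.erase j).card =
      if I = ∅ then 2 ^ Fintype.card ι else 0 := by
  rw [← powerset_univ, ← prod_one_add]
  split_ifs with hI
  · simp [hI, one_add_one_eq_two]
  · obtain ⟨j, hj⟩ := exists_odd_card_erase hι (nonempty_iff_ne_empty.2 hI)
    exact prod_eq_zero (mem_univ j) (by rw [hj.neg_one_pow, add_neg_cancel])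

end AlgebraicIdentities

section Clifford

variable {p q : ℕ}

theorem cliffordWeight_mul_self {n : ℕ} (i : Fin n) :
    cliffordWeight p i * cliffordWeight p i = 1 := by
  unfold cliffordWeight; split_ifs <;> norm_num

theorem cliffordE_mul_self (i : Fin (p + q)) :
    cliffordE p q i * cliffordE p q i = algebraMap ℝ _ (cliffordWeight p i) := by
  rw [cliffordE, CliffordAlgebra.ι_sq_scalar]
  simp [cliffordQ, Pi.single_apply]

theorem cliffordE_mul_cliffordE_of_ne {i j : Fin (p + q)} (h : i ≠ j) :
    cliffordE p q i * cliffordE p q j = -(cliffordE p q j * cliffordE p q i) := by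
  refine CliffordAlgebra.ι_mul_ι_comm_of_isOrtho ?_
  simp [QuadraticMap.isOrtho_def, cliffordQ, Pi.single_apply, mul_add, mul_ite, sum_add_distrib, h,
    h.symm, eq_comm]

theorem eLower_empty : eLower p q ∅ = 1 := by simp [eLower]

theorem eLower_singleton (i : Fin (p + q)) : eLower p q {i} = cliffordE p q i := by simp [eLower]

theorem eLower_insert_of_forall_lt {a : Fin (p + q)} {s : Finset (Fin (p + q))}
    (h : ∀ b ∈ s, a < b) : eLower p q (insert a s) = cliffordE p q a * eLower p q s := by
  rw [eLower, sort_insert _ (fun b hb => (h b hb).le) (fun ha => lt_irrefl a (h a ha))]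
  simp [eLower]

theorem cliffordE_mul_eLower (j : Fin (p + q)) (I : Finset (Fin (p + q))) :
    cliffordE p q j * eLower p q I =
      ((-1 : ℝ) ^ (I.erase j).card) • (eLower p q I * cliffordE p q j) := by
  rw [eLower, mul_prod_map_of_anticomm (R := ℝ) (fun _ _ => cliffordE_mul_cliffordE_of_ne) j]
  congr 2
  rw [← Multiset.coe_countP, sort_eq, Multiset.countP_eq_card_filter, ← filter_val, ← card_def,
    filter_ne']

theorem cliffordE_mul_eLower_mul_smul_cliffordE (j : Fin (p + q)) (I : Finset (Fin (p + q))) :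
    cliffordE p q j * eLower p q I * (cliffordWeight p j • cliffordE p q j) =
      ((-1 : ℝ) ^ (I.erase j).card) • eLower p q I := by
  rw [cliffordE_mul_eLower, smul_mul_assoc, mul_assoc, mul_smul_comm, cliffordE_mul_self,
    Algebra.smul_def (cliffordWeight p j), ← map_mul, cliffordWeight_mul_self, map_one, mul_one]

theorem eLower_mul_eLower_mul_eUpper (I J : Finset (Fin (p + q))) :
    eLower p q J * eLower p q I * eUpper p q J =
      (∏ j ∈ J, (-1 : ℝ) ^ (I.erase j).card) • eLower p q I := by
  rw [eLower, eUpper, List.prod_map_mul_mul_prod_map_reverse _ _ _ _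
    fun j _ => cliffordE_mul_eLower_mul_smul_cliffordE j I, prod_eq_multiset_prod,
    ← sort_eq J (· ≤ ·)]
  rfl

theorem sum_eLower_mul_eLower_mul_eUpper (h : Even (p + q)) (I : Finset (Fin (p + q))) :
    ∑ J, eLower p q J * eLower p q I * eUpper p q J =
      (if I = ∅ then (2 : ℝ) ^ (p + q) else 0) • eLower p q I := by
  simp_rw [eLower_mul_eLower_mul_eUpper, ← sum_smul]
  rw [sum_prod_neg_one_pow_card_erase (by simpa using h), Fintype.card_fin]

theorem exists_cliffordE_mul_eLower_eq_smul (i : Fin (p + q)) (I : Finset (Fin (p + q))) :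
    ∃ c : ℝ, cliffordE p q i * eLower p q I = c • eLower p q ({i} ∆ I) := by
  induction I using Finset.induction_on_min with
  | empty => exact ⟨1, by simp [Finset.symmDiff_def, eLower_empty, eLower_singleton]⟩
  | insert a s has ih =>
    rw [eLower_insert_of_forall_lt has]
    rcases lt_trichotomy i a with hia | rfl | hai
    · have hi : ∀ b ∈ insert a s, i < b := by
        simpa [hia] using fun b hb => hia.trans (has b hb)
      have hsymm : {i} ∆ insert a s = insert i (insert a s) := by
        ext x; have := has x; grind [mem_symmDiff]
      refine ⟨1, ?_⟩
      rw [hsymm, eLower_insert_of_forall_lt hi, eLower_insert_of_forall_lt has, one_smul]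
    · have hsymm : {i} ∆ insert i s = s := by
        ext x; have := has x; grind [mem_symmDiff]
      refine ⟨cliffordWeight p i, ?_⟩
      rw [← mul_assoc, cliffordE_mul_self, hsymm, Algebra.smul_def]
    · obtain ⟨c, hc⟩ := ih
      have hs : ∀ b ∈ {i} ∆ s, a < b := by
        intro b hb; have := has b; grind [mem_symmDiff]
      have hsymm : {i} ∆ insert a s = insert a ({i} ∆ s) := by
        ext x; have := has x; grind [mem_symmDiff]
      refine ⟨-c, ?_⟩
      rw [← mul_assoc, cliffordE_mul_cliffordE_of_ne hai.ne', neg_mul, mul_assoc, hc, hsymm,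
        eLower_insert_of_forall_lt hs, mul_smul_comm, neg_smul]

theorem cliffordE_mul_mem_span_range_eLower (i : Fin (p + q))
    {x : CliffordAlgebra (cliffordQ p q)}
    (hx : x ∈ Submodule.span ℝ (Set.range (eLower p q))) :
    cliffordE p q i * x ∈ Submodule.span ℝ (Set.range (eLower p q)) := by
  refine (Submodule.span_le.2 ?_ : _ ≤ (Submodule.span ℝ (Set.range (eLower p q))).comap
    (LinearMap.mulLeft ℝ (cliffordE p q i))) hx
  rintro _ ⟨I, rfl⟩
  obtain ⟨c, hc⟩ := exists_cliffordE_mul_eLower_eq_smul i I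
  simpa [hc] using Submodule.smul_mem _ c (Submodule.subset_span (Set.mem_range_self _))

theorem span_range_eLower : Submodule.span ℝ (Set.range (eLower p q)) = ⊤ := by
  rw [eq_top_iff]
  rintro x -
  induction x using CliffordAlgebra.left_induction with
  | algebraMap r =>
    rw [Algebra.algebraMap_eq_smul_one, ← eLower_empty]
    exact Submodule.smul_mem _ _ (Submodule.subset_span ⟨∅, rfl⟩)
  | add x y hx hy => exact add_mem hx hy
  | ι_mul x v hx =>
    rw [← univ_sum_single v, map_sum, sum_mul]
    refine sum_mem fun i _ => ?_
    rw [← mul_one (v i), ← smul_eq_mul (v i) (1 : ℝ), Pi.single_smul', map_smul, smul_mul_assoc]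
    exact Submodule.smul_mem _ _ (cliffordE_mul_mem_span_range_eLower i hx)

end Clifford

theorem scalar_part_even (p q : ℕ) (h : Even (p + q)) (a : CliffordAlgebra (cliffordQ p q)) :
    ∃ r : ℝ,
      (∑ J : Finset (Fin (p + q)), eLower p q J * a * eUpper p q J) =
        algebraMap ℝ (CliffordAlgebra (cliffordQ p q)) (2 ^ (p + q) * r) ∧
      a - algebraMap ℝ (CliffordAlgebra (cliffordQ p q)) r ∈
        Submodule.span ℝ
          {x : CliffordAlgebra (cliffordQ p q) |
            ∃ I : Finset (Fin (p + q)), I.Nonempty ∧ x = eLower p q I} := by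
  have ha : a ∈ Submodule.span ℝ (Set.range (eLower p q)) := span_range_eLower ▸ Submodule.mem_top
  obtain ⟨c, rfl⟩ := (Submodule.mem_span_range_iff_exists_fun ℝ).1 ha
  refine ⟨c ∅, ?_, ?_⟩
  · simp_rw [mul_sum, sum_mul, mul_smul_comm, smul_mul_assoc]
    rw [sum_comm]
    simp_rw [← smul_sum, sum_eLower_mul_eLower_mul_eUpper h, smul_smul]
    simp [mul_ite, ite_smul, eLower_empty, Algebra.algebraMap_eq_smul_one, mul_comm]
  · rw [← add_sum_erase _ _ (mem_univ ∅), eLower_empty, Algebra.algebraMap_eq_smul_one,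
      add_sub_cancel_left]
    exact Submodule.sum_mem _ fun I hI => Submodule.smul_mem _ _
      (Submodule.subset_span ⟨I, nonempty_iff_ne_empty.2 (ne_of_mem_erase hI), rfl⟩)
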